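/- Let s ∈ ℕ and let a, ã ∈ ℂ[X] be polynomials of degree at most s. Suppose λ₁, …, λ_{s+1} ∈ ℂ are pairwise distinct and nonzero, and for every i ∈ {1, …, s+1} both Δ_a(λ_i) = 0 and Δ_ã(λ_i) = 0, where Δ_p(λ) = λ(2e^{2λ} - e^{λ}) + p(λ)(e^{2λ} - e^{λ}) for a polynomial p. Then a = ã (i.e., all coefficients coincide: a_k = ã_k for k = 0, 1, …, s). -/
import Mathlib

/-- If `a, b` (the paper's `a` and `ã`) are polynomials of degree
at most `s`, and `λ₁, …, λ_{s+1}` are pairwise distinct nonzero complex numbers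
with `Δ_a(λᵢ) = 0` and `Δ_b(λᵢ) = 0` for all `i`, where
`Δ_p(l) = l (2 e^{2l} - e^l) + p(l) (e^{2l} - e^l)`, then `a = b`
(i.e., all coefficients coincide). -/
theorem stmt_5 (s : ℕ) (a b : Polynomial ℂ)
    (ha : a.degree ≤ s) (hb : b.degree ≤ s)
    (lam : Fin (s + 1) → ℂ)
    (hinj : Function.Injective lam)
    (hne : ∀ i, lam i ≠ 0)
    (hΔa : ∀ i, lam i * (2 * Complex.exp (2 * lam i) - Complex.exp (lam i)) +
      a.eval (lam i) * (Complex.exp (2 * lam i) - Complex.exp (lam i)) = 0)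
    (hΔb : ∀ i, lam i * (2 * Complex.exp (2 * lam i) - Complex.exp (lam i)) +
      b.eval (lam i) * (Complex.exp (2 * lam i) - Complex.exp (lam i)) = 0) :
    a = b := by
  have key : a - b = 0 := by
    apply Polynomial.eq_zero_of_natDegree_lt_card_of_eval_eq_zero (a - b) hinj
    · intro i
      have hdiff : (a.eval (lam i) - b.eval (lam i)) *
          (Complex.exp (2 * lam i) - Complex.exp (lam i)) = 0 := by
        linear_combination hΔa i - hΔb i
      have hexp : Complex.exp (2 * lam i) - Complex.exp (lam i) ≠ 0 := by
        intro h
        have heq : Complex.exp (2 * lam i) = Complex.exp (lam i) := by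
          linear_combination h
        have := hΔa i
        rw [heq] at this
        have h2 : lam i * Complex.exp (lam i) = 0 := by linear_combination this
        rcases mul_eq_zero.mp h2 with h3 | h3
        · exact hne i h3
        · exact Complex.exp_ne_zero _ h3
      have := (mul_eq_zero.mp hdiff).resolve_right hexp
      simpa [Polynomial.eval_sub, sub_eq_zero] using sub_eq_zero.mp this
    · calc (a - b).natDegree ≤ max a.natDegree b.natDegree := Polynomial.natDegree_sub_le a b
        _ ≤ s := max_le (Polynomial.natDegree_le_iff_degree_le.mpr ha)
            (Polynomial.natDegree_le_iff_degree_le.mpr hb)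
        _ < Fintype.card (Fin (s + 1)) := by simp
  exact sub_eq_zero.mp key
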